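/- Let a, b, c, d be two-site structure matrices with c₁₂ = b₂₁ satisfying, for every diagonal matrix D: a commutes with D⊗D, d commutes with D⊗D, (D⊗I) b (I⊗D) = (I⊗D) b (D⊗I), and (D⊗I) c (I⊗D) = (I⊗D) c (D⊗I). If an n×n matrix γ solves the dual classical reflection equation γ₁γ₂ a − d γ₁γ₂ + γ₂ b γ₁ − γ₁ c γ₂ = 0 (with γ₁ = γ⊗I, γ₂ = I⊗γ), then for every diagonal matrix D the matrix DγD also solves it. -/

import Mathlib

open Matrix BigOperators
open scoped Kronecker

/-- Elementary matrix `e_{ij}`. -/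
noncomputable def E (n : ℕ) (i j : Fin n) : Matrix (Fin n) (Fin n) ℂ :=
  Matrix.single i j 1

/-- The permutation operator `P = Σ_{i,j} e_{ij} ⊗ e_{ji}`. -/
noncomputable def Pmat (n : ℕ) : Matrix (Fin n × Fin n) (Fin n × Fin n) ℂ :=
  ∑ i : Fin n, ∑ j : Fin n, E n i j ⊗ₖ E n j i

/-- For a two-site matrix `x₁₂`, the flipped matrix `x₂₁ = P x₁₂ P`. -/
noncomputable def swap (n : ℕ) (x : Matrix (Fin n × Fin n) (Fin n × Fin n) ℂ) :
    Matrix (Fin n × Fin n) (Fin n × Fin n) ℂ :=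
  Pmat n * x * Pmat n

/-- The dual classical reflection equation
`γ₁ γ₂ a − d γ₁ γ₂ + γ₂ b γ₁ − γ₁ c γ₂ = 0`, with `γ₁ = γ ⊗ I`, `γ₂ = I ⊗ γ`. -/
noncomputable def SolvesRE (n : ℕ)
    (a b c dm : Matrix (Fin n × Fin n) (Fin n × Fin n) ℂ)
    (γ : Matrix (Fin n) (Fin n) ℂ) : Prop :=
  let γ₁ := γ ⊗ₖ (1 : Matrix (Fin n) (Fin n) ℂ)
  let γ₂ := (1 : Matrix (Fin n) (Fin n) ℂ) ⊗ₖ γ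
  γ₁ * γ₂ * a - dm * (γ₁ * γ₂) + γ₂ * b * γ₁ - γ₁ * c * γ₂ = 0

/-!
Write `D₁ = D ⊗ I`, `D₂ = I ⊗ D`, so that `(DγD)₁ = D₁γ₁D₁` and `(DγD)₂ = D₂γ₂D₂`. Since `D₁`
commutes with `γ₂` and `D₂` with `γ₁`, the twisting assumptions on `b` and `c` (and their trivial
analogue for `1`) turn each of `γ₁γ₂`, `γ₂bγ₁`, `γ₁cγ₂` computed for `DγD` into the same term for `γ`
conjugated by `D ⊗ D = D₁D₂ = D₂D₁`; the assumptions on `a` and `d` move that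
conjugation across the outer factor. Hence the equation for `DγD` is `(D ⊗ D) · (equation for γ) ·
(D ⊗ D) = 0`.
-/

theorem mul_mul_conj_eq_conj_mul_mul {M : Type*} [Monoid M] {p q x y b : M}
    (hpy : Commute p y) (hqx : Commute q x) (hb : q * b * p = p * b * q) :
    q * y * q * b * (p * x * p) = q * p * (y * b * x) * (q * p) := by
  calc q * y * q * b * (p * x * p) = q * y * (q * b * p) * x * p := by simp only [mul_assoc]
    _ = q * (y * p) * b * (q * x) * p := by rw [hb]; simp only [mul_assoc]
    _ = q * p * (y * b * x) * (q * p) := by rw [← hpy.eq, hqx.eq]; simp only [mul_assoc]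

theorem conj_mul_of_commute {M : Type*} [Monoid M] {s a : M} (x : M) (h : Commute s a) :
    s * x * s * a = s * (x * a) * s := by
  rw [mul_assoc _ s, h.eq]; simp only [mul_assoc]

theorem mul_conj_of_commute {M : Type*} [Monoid M] {s a : M} (x : M) (h : Commute a s) :
    a * (s * x * s) = s * (a * x) * s := by
  rw [← mul_assoc, ← mul_assoc, h.eq]; simp only [mul_assoc]

section Kronecker

variable {R l m : Type*} [CommSemiring R] [Fintype l] [Fintype m]

theorem kronecker_one_mul_one_kronecker [DecidableEq l] [DecidableEq m]
    (A : Matrix l l R) (B : Matrix m m R) :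
    (A ⊗ₖ (1 : Matrix m m R)) * ((1 : Matrix l l R) ⊗ₖ B) = A ⊗ₖ B := by
  rw [← mul_kronecker_mul, mul_one, one_mul]

theorem one_kronecker_mul_kronecker_one [DecidableEq l] [DecidableEq m]
    (A : Matrix l l R) (B : Matrix m m R) :
    ((1 : Matrix l l R) ⊗ₖ B) * (A ⊗ₖ (1 : Matrix m m R)) = A ⊗ₖ B := by
  rw [← mul_kronecker_mul, mul_one, one_mul]

theorem commute_kronecker_one_one_kronecker [DecidableEq l] [DecidableEq m]
    (A : Matrix l l R) (B : Matrix m m R) :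
    Commute (A ⊗ₖ (1 : Matrix m m R)) ((1 : Matrix l l R) ⊗ₖ B) :=
  (kronecker_one_mul_one_kronecker A B).trans (one_kronecker_mul_kronecker_one A B).symm

theorem mul_mul_kronecker_one [DecidableEq m] (A B C : Matrix l l R) :
    (A * B * C) ⊗ₖ (1 : Matrix m m R) = (A ⊗ₖ 1) * (B ⊗ₖ 1) * (C ⊗ₖ 1) := by
  simp only [← mul_kronecker_mul, mul_one]

theorem one_kronecker_mul_mul [DecidableEq l] (A B C : Matrix m m R) :
    (1 : Matrix l l R) ⊗ₖ (A * B * C) = (1 ⊗ₖ A) * (1 ⊗ₖ B) * (1 ⊗ₖ C) := by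
  simp only [← mul_kronecker_mul, mul_one]

end Kronecker

theorem reflection_solution_diagonal_dressing_general (n : ℕ)
    (a b c dm : Matrix (Fin n × Fin n) (Fin n × Fin n) ℂ)
    (hA : ∀ d : Fin n → ℂ,
      a * (Matrix.diagonal d ⊗ₖ Matrix.diagonal d)
        = (Matrix.diagonal d ⊗ₖ Matrix.diagonal d) * a)
    (hD : ∀ d : Fin n → ℂ,
      dm * (Matrix.diagonal d ⊗ₖ Matrix.diagonal d)
        = (Matrix.diagonal d ⊗ₖ Matrix.diagonal d) * dm)
    (hB : ∀ d : Fin n → ℂ,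
      (Matrix.diagonal d ⊗ₖ (1 : Matrix (Fin n) (Fin n) ℂ)) * b *
          ((1 : Matrix (Fin n) (Fin n) ℂ) ⊗ₖ Matrix.diagonal d)
        = ((1 : Matrix (Fin n) (Fin n) ℂ) ⊗ₖ Matrix.diagonal d) * b *
          (Matrix.diagonal d ⊗ₖ (1 : Matrix (Fin n) (Fin n) ℂ)))
    (hC : ∀ d : Fin n → ℂ,
      (Matrix.diagonal d ⊗ₖ (1 : Matrix (Fin n) (Fin n) ℂ)) * c *
          ((1 : Matrix (Fin n) (Fin n) ℂ) ⊗ₖ Matrix.diagonal d)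
        = ((1 : Matrix (Fin n) (Fin n) ℂ) ⊗ₖ Matrix.diagonal d) * c *
          (Matrix.diagonal d ⊗ₖ (1 : Matrix (Fin n) (Fin n) ℂ)))
    (γ : Matrix (Fin n) (Fin n) ℂ)
    (hγ : SolvesRE n a b c dm γ)
    (d : Fin n → ℂ) :
    SolvesRE n a b c dm (Matrix.diagonal d * γ * Matrix.diagonal d) := by
  set D := Matrix.diagonal d
  have hγ₁D₂ := commute_kronecker_one_one_kronecker γ D
  have hD₁γ₂ := commute_kronecker_one_one_kronecker D γ
  have hγ₁γ₂ := mul_mul_conj_eq_conj_mul_mul (b := 1) hγ₁D₂.symm hD₁γ₂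
    (by simp only [mul_one, (commute_kronecker_one_one_kronecker D D).eq])
  have hγ₂bγ₁ := mul_mul_conj_eq_conj_mul_mul hD₁γ₂ hγ₁D₂.symm (hB d).symm
  have hγ₁cγ₂ := mul_mul_conj_eq_conj_mul_mul hγ₁D₂.symm hD₁γ₂ (hC d)
  simp only [mul_one] at hγ₁γ₂
  rw [kronecker_one_mul_one_kronecker D D] at hγ₁γ₂ hγ₁cγ₂
  rw [one_kronecker_mul_kronecker_one D D] at hγ₂bγ₁
  simp only [SolvesRE] at hγ ⊢
  rw [mul_mul_kronecker_one, one_kronecker_mul_mul, hγ₁γ₂, hγ₂bγ₁, hγ₁cγ₂,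
    conj_mul_of_commute _ (hA d).symm, mul_conj_of_commute _ (hD d), ← sub_mul, ← add_mul,
    ← sub_mul, ← mul_sub, ← mul_add, ← mul_sub, hγ, mul_zero, zero_mul]

theorem reflection_solution_diagonal_dressing (n : ℕ)
    (a b c dm : Matrix (Fin n × Fin n) (Fin n × Fin n) ℂ)
    (hc : c = swap n b)
    (hA : ∀ d : Fin n → ℂ,
      a * (Matrix.diagonal d ⊗ₖ Matrix.diagonal d)
        = (Matrix.diagonal d ⊗ₖ Matrix.diagonal d) * a)
    (hD : ∀ d : Fin n → ℂ,
      dm * (Matrix.diagonal d ⊗ₖ Matrix.diagonal d)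
        = (Matrix.diagonal d ⊗ₖ Matrix.diagonal d) * dm)
    (hB : ∀ d : Fin n → ℂ,
      (Matrix.diagonal d ⊗ₖ (1 : Matrix (Fin n) (Fin n) ℂ)) * b *
          ((1 : Matrix (Fin n) (Fin n) ℂ) ⊗ₖ Matrix.diagonal d)
        = ((1 : Matrix (Fin n) (Fin n) ℂ) ⊗ₖ Matrix.diagonal d) * b *
          (Matrix.diagonal d ⊗ₖ (1 : Matrix (Fin n) (Fin n) ℂ)))
    (hC : ∀ d : Fin n → ℂ,
      (Matrix.diagonal d ⊗ₖ (1 : Matrix (Fin n) (Fin n) ℂ)) * c *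
          ((1 : Matrix (Fin n) (Fin n) ℂ) ⊗ₖ Matrix.diagonal d)
        = ((1 : Matrix (Fin n) (Fin n) ℂ) ⊗ₖ Matrix.diagonal d) * c *
          (Matrix.diagonal d ⊗ₖ (1 : Matrix (Fin n) (Fin n) ℂ)))
    (γ : Matrix (Fin n) (Fin n) ℂ)
    (hγ : SolvesRE n a b c dm γ)
    (d : Fin n → ℂ) :
    SolvesRE n a b c dm (Matrix.diagonal d * γ * Matrix.diagonal d) :=
  reflection_solution_diagonal_dressing_general n a b c dm hA hD hB hC γ hγ d
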